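/- Let N and b be coprime integers with M_b(N) nonempty, and let q be a prime divisor of |b|_N. Then there exists a positive integer z such that: (1) |b|_{zN} = |b|_N; (2) M_b(zN) ≠ ∅; (3) every d ∈ M_b(zN) satisfies ν_q(d) = ν_q(|b|_N). -/

import Mathlib

/-- Multiplicative order of `b` modulo `N`. -/
noncomputable def ord (b N : ℕ) : ℕ := orderOf (b : ZMod N)

/-- The Midy set of `N` to base `b`: divisors `d ≥ 2` of `|b|_N` such that for every
prime `q` dividing `gcd(b^(|b|_N/d) - 1, N)` one has `ν_q(N) ≤ ν_q(d)`. -/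
def MidySet (b N : ℕ) : Set ℕ :=
  {d | 2 ≤ d ∧ d ∣ ord b N ∧
    ∀ q : ℕ, q.Prime → q ∣ Nat.gcd (b ^ (ord b N / d) - 1) N →
      N.factorization q ≤ d.factorization q}


open Finset in
lemma lteStep (r : ℕ) (hr : r.Prime) (x : ℤ) (k : ℕ) (hk : 1 ≤ k)
    (h : (r:ℤ)^k ∣ x - 1) : (r:ℤ)^(k+1) ∣ x^r - 1 := by
  have hr1 : (r:ℤ) ∣ x - 1 := dvd_trans (by simpa using pow_dvd_pow (r:ℤ) hk) h
  have hgeom : (∑ i ∈ Finset.range r, x ^ i) * (x - 1) = x ^ r - 1 := geom_sum_mul x r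
  have hsum : (r:ℤ) ∣ ∑ i ∈ Finset.range r, x ^ i := by
    have h2 : (r:ℤ) ∣ ∑ i ∈ Finset.range r, (x ^ i - 1) := by
      apply Finset.dvd_sum
      intro i _
      exact dvd_trans hr1 (by simpa using sub_dvd_pow_sub_pow x 1 i)
    have h3 : ∑ i ∈ Finset.range r, (x ^ i - 1) = (∑ i ∈ Finset.range r, x ^ i) - r := by
      rw [Finset.sum_sub_distrib]; simp
    rw [h3] at h2
    simpa using dvd_add h2 (dvd_refl (r:ℤ))
  calc (r:ℤ)^(k+1) = (r:ℤ) * (r:ℤ)^k := by ring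
  _ ∣ (∑ i ∈ Finset.range r, x ^ i) * (x - 1) := mul_dvd_mul hsum h
  _ = x ^ r - 1 := hgeom

lemma ltePow (r : ℕ) (hr : r.Prime) (x : ℤ) (h : (r:ℤ) ∣ x - 1) (s : ℕ) :
    (r:ℤ)^(s+1) ∣ x^(r^s) - 1 := by
  induction s with
  | zero => simpa using h
  | succ s ih =>
      have := lteStep r hr (x ^ (r^s)) (s+1) (by omega) ih
      rwa [← pow_mul, ← pow_succ] at this


lemma natSubCast (m a : ℕ) (ha : 1 ≤ a) : m ∣ a - 1 ↔ (m:ℤ) ∣ (a:ℤ) - 1 := by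
  rw [← Int.natCast_dvd_natCast, Nat.cast_sub ha, Nat.cast_one]

lemma ltePowNat (r : ℕ) (hr : r.Prime) (b : ℕ) (hb : 1 ≤ b) (m : ℕ) (h : r ∣ b^m - 1) (s : ℕ) :
    r^(s+1) ∣ b^(m * r^s) - 1 := by
  have h1 : 1 ≤ b ^ m := Nat.one_le_pow _ _ hb
  have h2 : 1 ≤ b ^ (m * r ^ s) := Nat.one_le_pow _ _ hb
  rw [natSubCast _ _ h1] at h
  rw [natSubCast _ _ h2]
  push_cast
  rw [pow_mul]
  have := ltePow r hr ((b:ℤ)^m) (by push_cast at h ⊢; exact h) s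
  push_cast at this ⊢
  exact this

-- divides iff pow = 1 in ZMod
lemma dvd_pow_sub_one_iff (b n M : ℕ) (hb : 1 ≤ b) :
    M ∣ b ^ n - 1 ↔ (b : ZMod M) ^ n = 1 := by
  have h1 : 1 ≤ b ^ n := Nat.one_le_pow _ _ hb
  rw [← ZMod.natCast_eq_zero_iff, Nat.cast_sub h1, Nat.cast_pow, Nat.cast_one,
    sub_eq_zero, eq_comm]

lemma dvd_pow_sub_one_iff' (b n M : ℕ) (hb : 1 ≤ b) :
    M ∣ b ^ n - 1 ↔ ord b M ∣ n := by
  rw [dvd_pow_sub_one_iff b n M hb, ord, ← orderOf_dvd_iff_pow_eq_one]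

lemma ord_pos (b N : ℕ) (hb : 2 ≤ b) (hN : 0 < N) (h : Nat.Coprime N b) : 0 < ord b N := by
  rcases Nat.eq_or_lt_of_le hN with h1 | h1
  · have : N = 1 := h1.symm
    subst this
    rw [ord]
    have : (b : ZMod 1) = 1 := Subsingleton.elim _ _
    rw [this, orderOf_one]
    norm_num
  · haveI : NeZero N := ⟨by omega⟩
    have hu : IsUnit (b : ZMod N) := (ZMod.isUnit_iff_coprime b N).mpr h.symm
    rcases hu with ⟨u, hu⟩
    rw [ord, ← hu, orderOf_units]
    exact orderOf_pos u

lemma ord_eq_of (b N M : ℕ) (hb : 2 ≤ b) (hNM : N ∣ M) (hM : M ∣ b ^ (ord b N) - 1) :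
    ord b M = ord b N := by
  have hb1 : 1 ≤ b := by omega
  have h1 : ord b M ∣ ord b N := (dvd_pow_sub_one_iff' b _ M hb1).mp hM
  have h2 : ord b N ∣ ord b M := by
    have h3 : M ∣ b ^ (ord b M) - 1 := (dvd_pow_sub_one_iff' b _ M hb1).mpr dvd_rfl
    exact (dvd_pow_sub_one_iff' b _ N hb1).mp (hNM.trans h3)
  exact Nat.dvd_antisymm h1 h2

lemma ordr_iff (b q r : ℕ) (hb : 2 ≤ b) (hq : q.Prime) (h1 : r ∣ b ^ q - 1)
    (h2 : ¬ r ∣ b - 1) (m : ℕ) : r ∣ b ^ m - 1 ↔ q ∣ m := by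
  have hb1 : 1 ≤ b := by omega
  have ho : ord b r ∣ q := (dvd_pow_sub_one_iff' b q r hb1).mp h1
  have ho1 : ord b r ≠ 1 := by
    intro hh
    apply h2
    have := (dvd_pow_sub_one_iff' b 1 r hb1).mpr (hh ▸ dvd_rfl)
    simpa using this
  have hoq : ord b r = q := ((hq.eq_one_or_self_of_dvd _ ho).resolve_left ho1)
  rw [dvd_pow_sub_one_iff' b m r hb1, hoq]

open Finset in
lemma exists_r (b q : ℕ) (hb : 2 ≤ b) (hq : q.Prime) (hA : ¬(q = 2 ∧ Odd b)) :
    ∃ r : ℕ, r.Prime ∧ r ≠ q ∧ r ∣ b ^ q - 1 ∧ ¬ r ∣ b - 1 := by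
  have hb1 : 1 ≤ b := by omega
  have hbq : 1 ≤ b ^ q := Nat.one_le_pow _ _ (by omega)
  set Φ : ℕ := ∑ i ∈ range q, b ^ i with hΦdef
  have hΦmul : Φ * (b - 1) = b ^ q - 1 := by
    have h := geom_sum_mul (b : ℤ) q
    have : ((Φ * (b - 1) : ℕ) : ℤ) = ((b ^ q - 1 : ℕ) : ℤ) := by
      rw [hΦdef]
      push_cast [Nat.cast_sub hb1, Nat.cast_sub hbq]
      exact h
    exact_mod_cast this
  have hΦdvd : Φ ∣ b ^ q - 1 := ⟨b - 1, hΦmul.symm⟩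
  have hq2 : 2 ≤ q := hq.two_le
  have hΦgt : q < Φ := by
    have hsplit : Φ = (∑ i ∈ range (q - 1), b ^ (i + 1)) + 1 := by
      rw [hΦdef]
      have : q = (q - 1) + 1 := by omega
      rw [this, Finset.sum_range_succ']
      simp
    have hterm : ∀ i ∈ range (q - 1), 2 ≤ b ^ (i + 1) := by
      intro i _
      calc 2 ≤ b := hb
      _ ≤ b ^ (i + 1) := Nat.le_self_pow (by omega) b
    have hsum : 2 * (q - 1) ≤ ∑ i ∈ range (q - 1), b ^ (i + 1) := by
      calc 2 * (q - 1) = ∑ _i ∈ range (q - 1), 2 := by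
            rw [Finset.sum_const, card_range]; ring
      _ ≤ _ := Finset.sum_le_sum hterm
    omega
  have hΦ0 : Φ ≠ 0 := by omega
  -- value of Φ mod r when r ∣ b - 1
  have hmod : ∀ r : ℕ, r ∣ b - 1 → (Φ : ZMod r) = (q : ZMod r) := by
    intro r hr
    have hb' : (b : ZMod r) = 1 := by
      have : ((b - 1 : ℕ) : ZMod r) = 0 := (ZMod.natCast_eq_zero_iff _ _).mpr hr
      rwa [Nat.cast_sub hb1, Nat.cast_one, sub_eq_zero] at this
    rw [hΦdef]
    push_cast
    rw [hb']
    simp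
  have hnotq : ∀ r : ℕ, r.Prime → r ∣ Φ → r ∣ b - 1 → r = q := by
    intro r hr hrΦ hrb
    have h0 : (Φ : ZMod r) = 0 := (ZMod.natCast_eq_zero_iff _ _).mpr hrΦ
    have := hmod r hrb
    rw [h0] at this
    have : r ∣ q := (ZMod.natCast_eq_zero_iff _ _).mp this.symm
    exact ((hq.eq_one_or_self_of_dvd _ this).resolve_left hr.one_lt.ne')
  by_cases hqΦ : q ∣ Φ
  · -- then q ∣ b - 1 and q is odd
    haveI : Fact q.Prime := ⟨hq⟩
    have hqb : q ∣ b - 1 := by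
      have h1 : q ∣ b ^ q - 1 := hqΦ.trans hΦdvd
      have h2 : (b : ZMod q) ^ q = 1 := (dvd_pow_sub_one_iff b q q hb1).mp h1
      rw [ZMod.pow_card] at h2
      have : ((b - 1 : ℕ) : ZMod q) = 0 := by
        rw [Nat.cast_sub hb1, Nat.cast_one, h2, sub_self]
      exact (ZMod.natCast_eq_zero_iff _ _).mp this
    have hqodd : q ≠ 2 := by
      intro h2
      apply hA
      refine ⟨h2, ?_⟩
      subst h2
      rcases hqb with ⟨c, hc⟩
      exact ⟨c, by omega⟩
    -- q^2 does not divide Φ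
    have hq2Φ : ¬ (q * q ∣ Φ) := by
      intro hcontra
      obtain ⟨c, hc⟩ := hqb
      have hbeq : b = q * c + 1 := by omega
      -- work in ZMod (q*q)
      obtain ⟨x, hx⟩ : ∃ x : ZMod (q * q), x = (q : ZMod (q * q)) * (c : ZMod (q * q)) := ⟨_, rfl⟩
      have hx2 : x * x = 0 := by
        rw [hx]
        have : ((q : ZMod (q*q)) * c) * ((q : ZMod (q*q)) * c) = ((q*q : ℕ) : ZMod (q*q)) * (c * c) := by
          push_cast; ring
        rw [this, ZMod.natCast_self, zero_mul]
      have hbcast : (b : ZMod (q * q)) = 1 + x := by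
        rw [hbeq]; push_cast; rw [hx]; ring
      have hpow : ∀ i : ℕ, (1 + x) ^ i = 1 + (i : ZMod (q*q)) * x := by
        intro i
        induction i with
        | zero => simp
        | succ i ih =>
            rw [pow_succ, ih]
            have hexp : (1 + (i : ZMod (q*q)) * x) * (1 + x)
                = 1 + ((i : ZMod (q*q)) + 1) * x + (i : ZMod (q*q)) * (x * x) := by ring
            rw [hexp, hx2, mul_zero, add_zero]
            push_cast
            ring
      have hsumid : (∑ i ∈ range q, (i : ZMod (q*q))) * x = 0 := by
        obtain ⟨t, ht⟩ : 2 ∣ q - 1 := by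
          rcases Nat.even_or_odd q with he | ho
          · exact absurd ((Nat.Prime.even_iff hq).mp he) hqodd
          · rcases ho with ⟨m, hm⟩; exact ⟨m, by omega⟩
        have hsum2 : (∑ i ∈ range q, i) * 2 = q * (q - 1) := Finset.sum_range_id_mul_two q
        have hsumval : (∑ i ∈ range q, i) = q * t := by
          have : (∑ i ∈ range q, i) * 2 = (q * t) * 2 := by rw [hsum2, ht]; ring
          omega
        have hcast : (∑ i ∈ range q, (i : ZMod (q*q))) = ((∑ i ∈ range q, i : ℕ) : ZMod (q*q)) := by
          push_cast; rfl
        rw [hcast, hsumval, hx]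
        have : ((q * t : ℕ) : ZMod (q*q)) * ((q : ZMod (q*q)) * c) = ((q*q : ℕ) : ZMod (q*q)) * (t * c) := by
          push_cast; ring
        rw [this, ZMod.natCast_self, zero_mul]
      have hΦcast : (Φ : ZMod (q * q)) = (q : ZMod (q * q)) := by
        rw [hΦdef]
        push_cast
        calc (∑ i ∈ range q, (b : ZMod (q*q)) ^ i)
            = ∑ i ∈ range q, (1 + (i : ZMod (q*q)) * x) := by
              refine Finset.sum_congr rfl fun i _ => ?_
              rw [hbcast, hpow]
        _ = (q : ZMod (q*q)) + (∑ i ∈ range q, (i : ZMod (q*q))) * x := by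
              rw [Finset.sum_add_distrib, Finset.sum_const, card_range, Finset.sum_mul]
              simp [nsmul_eq_mul]
        _ = (q : ZMod (q*q)) := by rw [hsumid, add_zero]
      have h0 : (Φ : ZMod (q * q)) = 0 := (ZMod.natCast_eq_zero_iff _ _).mpr hcontra
      rw [h0] at hΦcast
      have : q * q ∣ q := (ZMod.natCast_eq_zero_iff _ _).mp hΦcast.symm
      have := Nat.le_of_dvd (by omega) this
      nlinarith
    -- pick r := minFac (Φ / q)
    obtain ⟨m, hm⟩ := hqΦ
    have hm2 : 2 ≤ m := by nlinarith
    set r := m.minFac with hrdef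
    have hr : r.Prime := Nat.minFac_prime (by omega)
    have hrm : r ∣ m := Nat.minFac_dvd m
    have hrΦ : r ∣ Φ := hrm.trans ⟨q, by rw [hm]; ring⟩
    have hrq : r ≠ q := by
      intro hh
      subst hh
      exact hq2Φ (by rw [hm]; exact Nat.mul_dvd_mul_left r hrm)
    refine ⟨r, hr, hrq, hrΦ.trans hΦdvd, fun hcon => hrq (hnotq r hr hrΦ hcon)⟩
  · set r := Φ.minFac with hrdef
    have hr : r.Prime := Nat.minFac_prime (by omega)
    have hrΦ : r ∣ Φ := Nat.minFac_dvd Φ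
    have hrq : r ≠ q := fun hh => hqΦ (hh ▸ hrΦ)
    exact ⟨r, hr, hrq, hrΦ.trans hΦdvd, fun hcon => hrq (hnotq r hr hrΦ hcon)⟩

lemma main_con (b N q e r v d0 : ℕ) (hb : 2 ≤ b) (hN : 0 < N)
    (he : ord b N = e) (he0 : 0 < e) (hq : q.Prime) (hqe : q ∣ e) (hr : r.Prime)
    (hd02 : 2 ≤ d0) (hd0e : d0 ∣ e)
    (hd0c : ∀ p : ℕ, p.Prime → p ∣ Nat.gcd (b ^ (e / d0) - 1) N →
      N.factorization p ≤ d0.factorization p)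
    (hv1 : 1 ≤ v) (hvN : N.factorization r ≤ v) (hvdvd : r ^ v ∣ b ^ e - 1)
    (P3 : ∀ d, d ∣ e → r ∣ b ^ (e / d) - 1 → v ≤ d.factorization r →
      d.factorization q = e.factorization q)
    (P4 : ∀ d, d ∣ e → ¬ r ∣ b ^ (e / d) - 1 →
      d.factorization q = e.factorization q)
    (P5 : ∀ d, d ∣ e → d.factorization q = e.factorization q → r ∣ b ^ (e / d) - 1 →
      v ≤ d.factorization r) :
    ∃ z : ℕ, 0 < z ∧ ord b (z * N) = ord b N ∧ (MidySet b (z * N)).Nonempty ∧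
      ∀ d ∈ MidySet b (z * N), d.factorization q = (ord b N).factorization q := by
  have hb1 : 1 ≤ b := by omega
  have hN0 : N ≠ 0 := by omega
  have he0' : e ≠ 0 := by omega
  set k := v - N.factorization r with hk
  refine ⟨r ^ k, Nat.pow_pos (n := k) hr.pos, ?_⟩
  set M := r ^ k * N with hM
  have hM0 : M ≠ 0 := Nat.mul_ne_zero (pow_ne_zero _ hr.pos.ne') hN0
  have hNdvd : N ∣ b ^ e - 1 := (dvd_pow_sub_one_iff' b e N hb1).mpr (he ▸ dvd_rfl)
  have hMdvd : M ∣ b ^ e - 1 := by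
    have hsplit : M = r ^ v * ordCompl[r] N := by
      calc M = r ^ k * (r ^ N.factorization r * ordCompl[r] N) := by
            rw [Nat.ordProj_mul_ordCompl_eq_self]
      _ = r ^ (k + N.factorization r) * ordCompl[r] N := by rw [pow_add]; ring
      _ = r ^ v * ordCompl[r] N := by congr 2; omega
    rw [hsplit]
    refine Nat.Coprime.mul_dvd_of_dvd_of_dvd ?_ hvdvd ((Nat.ordCompl_dvd N r).trans hNdvd)
    exact Nat.Coprime.pow_left _ (Nat.coprime_ordCompl hr hN0)
  have hordM : ord b M = e := by
    have := ord_eq_of b N M hb (Dvd.intro_left _ rfl) (by rw [he]; exact hMdvd)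
    rw [this, he]
  -- factorization of M
  have hMfac : ∀ p : ℕ, M.factorization p = (r ^ k).factorization p + N.factorization p := by
    intro p
    rw [hM, Nat.factorization_mul (pow_ne_zero _ hr.pos.ne') hN0]
    rfl
  have hMfacr : M.factorization r = v := by
    rw [hMfac r, Nat.Prime.factorization_pow hr, Finsupp.single_eq_same]
    omega
  have hMfacp : ∀ p : ℕ, p ≠ r → M.factorization p = N.factorization p := by
    intro p hp
    rw [hMfac p, Nat.Prime.factorization_pow hr, Finsupp.single_eq_of_ne' (fun hh => hp hh.symm),
      zero_add]
  have hrM : r ∣ M := by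
    have : r ^ 1 ∣ M := (Nat.Prime.pow_dvd_iff_le_factorization hr hM0).mpr (by omega)
    simpa using this
  constructor
  · rw [hordM, he]
  have hd00 : d0 ≠ 0 := by omega
  -- the witness d1
  have hd0le : d0.factorization q ≤ e.factorization q :=
    (Nat.factorization_le_iff_dvd hd00 he0').mpr hd0e q
  set j := e.factorization q - d0.factorization q with hj
  set d1 := d0 * q ^ j with hd1
  have hqj0 : q ^ j ≠ 0 := pow_ne_zero _ hq.pos.ne'
  have hd10 : d1 ≠ 0 := Nat.mul_ne_zero hd00 hqj0
  have hd1fq : d1.factorization q = e.factorization q := by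
    rw [hd1, Nat.factorization_mul hd00 hqj0, Finsupp.add_apply, Nat.Prime.factorization_pow hq,
      Finsupp.single_eq_same]
    omega
  have hd1e : d1 ∣ e := by
    have hed0 : e / d0 ≠ 0 := by
      have := Nat.div_pos (Nat.le_of_dvd (by omega) hd0e) (by omega)
      omega
    have hqj : q ^ j ∣ e / d0 := by
      refine (Nat.Prime.pow_dvd_iff_le_factorization hq hed0).mpr ?_
      rw [Nat.factorization_div hd0e, Finsupp.tsub_apply]
    calc d1 ∣ d0 * (e / d0) := Nat.mul_dvd_mul_left d0 hqj
    _ = e := Nat.mul_div_cancel' hd0e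
  have hd0d1 : d0 ∣ d1 := Dvd.intro _ rfl
  have hd1fac : ∀ p, d0.factorization p ≤ d1.factorization p :=
    (Nat.factorization_le_iff_dvd hd00 hd10).mpr hd0d1
  have hdivchain : b ^ (e / d1) - 1 ∣ b ^ (e / d0) - 1 := by
    have h5 : d0 * (q ^ j * (e / d1)) = e := by
      rw [← mul_assoc, ← hd1]
      exact Nat.mul_div_cancel' hd1e
    have h6 : e / d0 = q ^ j * (e / d1) := by
      conv_lhs => rw [← h5]
      rw [Nat.mul_div_cancel_left _ (show 0 < d0 by omega)]
    rw [h6, mul_comm, pow_mul]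
    simpa using Nat.sub_dvd_pow_sub_pow (b ^ (e / d1)) 1 (q ^ j)
  constructor
  · -- nonemptiness
    refine ⟨d1, ⟨?_, ?_, ?_⟩⟩
    · have : 1 ≤ q ^ j := Nat.one_le_pow _ _ hq.pos
      calc 2 ≤ d0 := hd02
      _ ≤ d1 := by rw [hd1]; exact Nat.le_mul_of_pos_right d0 (by omega)
    · rw [hordM]; exact hd1e
    · intro p hp hpgcd
      rw [hordM] at hpgcd
      have hp1 : p ∣ b ^ (e / d1) - 1 := hpgcd.trans (Nat.gcd_dvd_left _ _)
      have hpM : p ∣ M := hpgcd.trans (Nat.gcd_dvd_right _ _)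
      rcases eq_or_ne p r with rfl | hpr
      · rw [hMfacr]
        exact P5 d1 hd1e hd1fq hp1
      · rw [hMfacp p hpr]
        have hpN : p ∣ N := by
          rcases (hp.dvd_mul).mp (hM ▸ hpM) with h1 | h1
          · exact absurd ((Nat.prime_dvd_prime_iff_eq hp hr).mp (hp.dvd_of_dvd_pow h1)) hpr
          · exact h1
        have := hd0c p hp (Nat.dvd_gcd (hp1.trans hdivchain) hpN)
        exact this.trans (hd1fac p)
  · -- all elements have full q-valuation
    intro d hd
    obtain ⟨hd2, hdd, hdc⟩ := hd
    rw [hordM] at hdd hdc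
    rw [he]
    by_cases hrd : r ∣ b ^ (e / d) - 1
    · have := hdc r hr (Nat.dvd_gcd hrd hrM)
      rw [hMfacr] at this
      exact P3 d hdd hrd this
    · exact P4 d hdd hrd

theorem stmt14 (b N q : ℕ) (hb : 2 ≤ b) (hN : 0 < N) (h : Nat.Coprime N b)
    (hne : (MidySet b N).Nonempty) (hq : q.Prime) (hqd : q ∣ ord b N) :
    ∃ z : ℕ, 0 < z ∧ ord b (z * N) = ord b N ∧ (MidySet b (z * N)).Nonempty ∧
      ∀ d ∈ MidySet b (z * N), d.factorization q = (ord b N).factorization q := by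
  obtain ⟨d0, hd02, hd0e0, hd0c0⟩ := hne
  set e := ord b N with hedef
  have he0 : 0 < e := ord_pos b N hb hN h
  have hb1 : 1 ≤ b := by omega
  have hN0 : N ≠ 0 := by omega
  have he0' : e ≠ 0 := by omega
  have hd00 : d0 ≠ 0 := by omega
  have hbe0 : b ^ e - 1 ≠ 0 := by
    have : b ≤ b ^ e := Nat.le_self_pow he0' b
    omega
  have hfacmono : ∀ d, d ∣ e → ∀ p : ℕ, d.factorization p ≤ e.factorization p := by
    intro d hd p
    have hd0 : d ≠ 0 := by
      rintro rfl
      exact he0' (Nat.eq_zero_of_zero_dvd hd)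
    exact (Nat.factorization_le_iff_dvd hd0 he0').mpr hd p
  by_cases hB : q = 2 ∧ Odd b
  · obtain ⟨hq2, hbodd⟩ := hB
    subst hq2
    have hodd_dvd : ∀ m : ℕ, 2 ∣ b ^ m - 1 := by
      intro m
      exact (Nat.Odd.sub_odd (hbodd.pow) odd_one).two_dvd
    set v := e.factorization 2 with hv
    have hv1 : 1 ≤ v := Nat.Prime.factorization_pos_of_dvd Nat.prime_two he0' hqd
    have hvN : N.factorization 2 ≤ v := by
      by_cases h2N : 2 ∣ N
      · have h1 := hd0c0 2 Nat.prime_two (Nat.dvd_gcd (hodd_dvd _) h2N)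
        have h2 := hfacmono d0 hd0e0 2
        omega
      · rw [Nat.factorization_eq_zero_of_not_dvd h2N]
        omega
    have hvdvd : 2 ^ v ∣ b ^ e - 1 := by
      have h1 : 2 ^ (v + 1) ∣ b ^ (1 * 2 ^ v) - 1 :=
        ltePowNat 2 Nat.prime_two b hb1 1 (by simpa using hodd_dvd 1) v
      rw [one_mul] at h1
      obtain ⟨t, ht⟩ := Nat.ordProj_dvd e 2
      have h2 : b ^ (2 ^ v) - 1 ∣ b ^ e - 1 := by
        rw [ht, pow_mul]
        simpa using Nat.sub_dvd_pow_sub_pow (b ^ (2 ^ v)) 1 t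
      exact (dvd_trans (pow_dvd_pow 2 (by omega)) h1).trans h2
    refine main_con b N 2 e 2 v d0 hb hN hedef.symm he0 Nat.prime_two hqd Nat.prime_two
      hd02 hd0e0 hd0c0 hv1 hvN hvdvd ?_ ?_ ?_
    · intro d hd _ hvle
      have := hfacmono d hd 2
      omega
    · intro d _ hnot
      exact absurd (hodd_dvd _) hnot
    · intro d _ hfq _
      omega
  · obtain ⟨r, hr, hrq, hrbq, hrb1⟩ := exists_r b q hb hq hB
    have hiff : ∀ m, r ∣ b ^ m - 1 ↔ q ∣ m := ordr_iff b q r hb hq hrbq hrb1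
    set v := (b ^ e - 1).factorization r with hv
    have hvdvd : r ^ v ∣ b ^ e - 1 := Nat.ordProj_dvd _ r
    have hv1 : 1 ≤ v := Nat.Prime.factorization_pos_of_dvd hr hbe0 ((hiff e).mpr hqd)
    have hNdvd : N ∣ b ^ e - 1 := (dvd_pow_sub_one_iff' b e N hb1).mpr dvd_rfl
    have hvN : N.factorization r ≤ v :=
      (Nat.factorization_le_iff_dvd hN0 hbe0).mpr hNdvd r
    have hre : e.factorization r < v := by
      obtain ⟨s, hs⟩ : ∃ s, s = e.factorization r := ⟨_, rfl⟩
      have hcop : Nat.Coprime q (r ^ s) :=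
        Nat.Coprime.pow_right _ ((Nat.coprime_primes hq hr).mpr (fun hh => hrq hh.symm))
      have h1 : q * r ^ s ∣ e :=
        hcop.mul_dvd_of_dvd_of_dvd hqd (hs ▸ Nat.ordProj_dvd e r)
      have h2 : r ^ (s + 1) ∣ b ^ (q * r ^ s) - 1 :=
        ltePowNat r hr b hb1 q ((hiff q).mpr dvd_rfl) s
      obtain ⟨t, ht⟩ := h1
      have h3 : b ^ (q * r ^ s) - 1 ∣ b ^ e - 1 := by
        conv_rhs => rw [ht, pow_mul]
        simpa using Nat.sub_dvd_pow_sub_pow (b ^ (q * r ^ s)) 1 t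
      have h4 := (Nat.Prime.pow_dvd_iff_le_factorization hr hbe0).mp (h2.trans h3)
      omega
    refine main_con b N q e r v d0 hb hN hedef.symm he0 hq hqd hr
      hd02 hd0e0 hd0c0 hv1 hvN hvdvd ?_ ?_ ?_
    · intro d hd hrd hvle
      exfalso
      have h1 : q ∣ e / d := (hiff _).mp hrd
      have := hfacmono d hd r
      omega
    · intro d hd hnot
      have hqn : ¬ q ∣ e / d := fun hh => hnot ((hiff _).mpr hh)
      have h0 : (e / d).factorization q = 0 := Nat.factorization_eq_zero_of_not_dvd hqn
      rw [Nat.factorization_div hd, Finsupp.tsub_apply] at h0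
      have := hfacmono d hd q
      omega
    · intro d hd hfq hrd
      exfalso
      have hq1 : q ∣ e / d := (hiff _).mp hrd
      have hdpos : 0 < d := by
        rcases Nat.eq_zero_or_pos d with rfl | hh
        · exact absurd (Nat.eq_zero_of_zero_dvd hd) he0'
        · exact hh
      have hed : e / d ≠ 0 := by
        have := Nat.div_pos (Nat.le_of_dvd he0 hd) hdpos
        omega
      have h0 := Nat.Prime.factorization_pos_of_dvd hq hed hq1
      rw [Nat.factorization_div hd, Finsupp.tsub_apply] at h0
      have := hfacmono d hd q
      omega
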